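/- arXiv:math/0102005 — 3 statements merged into one kernel-verified Lean document; each statement's English description precedes it below -/
import Mathlib

section
/- Let ψ : R → S be a local homomorphism between commutative noetherian local rings with maximal ideals m ⊂ R and n ⊂ S (so ψ(m) ⊆ n). Let u : M → N be a homomorphism of finitely generated S-modules such that N is flat as an R-module (via ψ). If the induced map u ⊗_R R/m : M/mM → N/mN is injective and its cokernel is a free S/mS-module, then u itself is injective and its cokernel is a free S-module. -/
/-!
Lift a basis of the free `S/mS`-module `coker (u ⊗ S/mS)` to elements `n i ∈ N` and
consider `w = (u, n) : M × S^ι → N`. By construction `w ⊗ S/mS` is bijective, so `w` is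
surjective by Nakayama. Since `N` is `R`-flat, `0 → ker w → M × S^ι → N → 0` stays exact
after `⊗_R R/m`, so `ker w ∩ m (M × S^ι) = m ker w`; as `w ⊗ S/mS` is injective, this gives
`ker w = mS · ker w`, and `ker w = 0` by Nakayama again. Hence `w : M × S^ι ≃ N`, so `u` is
injective with cokernel `S^ι`.
-/

open TensorProduct IsLocalRing Function

namespace LinearMap

section Ring

variable {R M N F : Type*} [Ring R] [AddCommGroup M] [Module R M] [AddCommGroup N] [Module R N]
  [AddCommGroup F] [Module R F]

theorem bijective_coprod_iff (u : M →ₗ[R] N) (g : F →ₗ[R] N) :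
    Bijective (u.coprod g) ↔ Injective u ∧ Bijective ((range u).mkQ ∘ₗ g) := by
  have mkQ_g_eq_zero (c : F) : ((range u).mkQ ∘ₗ g) c = 0 ↔ ∃ m, u m = g c := by
    rw [comp_apply, Submodule.mkQ_apply, Submodule.Quotient.mk_eq_zero, mem_range]
  rw [Bijective, Bijective, injective_iff_map_eq_zero, injective_iff_map_eq_zero,
    injective_iff_map_eq_zero]
  constructor
  · rintro ⟨hinj, hsurj⟩
    refine ⟨fun m hm => congrArg Prod.fst (hinj (m, 0) (by simp [hm])), fun c hc => ?_, ?_⟩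
    · obtain ⟨m, hm⟩ := (mkQ_g_eq_zero c).mp hc
      exact congrArg Prod.snd (hinj (-m, c) (by simp [hm]))
    · rintro ⟨y⟩
      obtain ⟨⟨m, c⟩, rfl⟩ := hsurj y
      exact ⟨c, (Submodule.Quotient.eq _).mpr ⟨-m, by simp⟩⟩
  · rintro ⟨hu, hinj, hsurj⟩
    refine ⟨fun ⟨m, c⟩ h => ?_, fun y => ?_⟩
    · rw [coprod_apply] at h
      obtain rfl : c = 0 :=
        hinj c ((mkQ_g_eq_zero c).mpr ⟨-m, by simp [eq_neg_of_add_eq_zero_right h]⟩)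
      simpa using hu m (by simpa using h)
    · obtain ⟨c, hc⟩ := hsurj ((range u).mkQ y)
      obtain ⟨m, hm⟩ := (Submodule.Quotient.eq _).mp hc
      exact ⟨(-m, c), by simp [hm]⟩

end Ring

section QuotientTensor

variable {A M N : Type*} [CommRing A] [AddCommGroup M] [Module A M] [AddCommGroup N] [Module A N]

theorem comap_smul_top_le_of_injective_lTensor (f : M →ₗ[A] N) {J : Ideal A}
    (hf : Injective (f.lTensor (A ⧸ J))) :
    (J • ⊤ : Submodule A N).comap f ≤ J • ⊤ := by
  intro x hx
  rw [← ker_tensorProductMk] at hx ⊢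
  exact hf (by simpa using hx)

theorem surjective_of_surjective_lTensor [Module.Finite A N] (f : M →ₗ[A] N) {J : Ideal A}
    (hJ : J ≤ Ideal.jacobson ⊥) (hf : Surjective (f.lTensor (A ⧸ J))) : Surjective f := by
  rw [← range_eq_top, eq_top_iff]
  refine Submodule.le_of_le_smul_of_le_jacobson_bot Module.Finite.fg_top hJ fun y _ => ?_
  obtain ⟨z, hz⟩ := hf (1 ⊗ₜ y)
  obtain ⟨x, rfl⟩ := TensorProduct.mk_surjective A M (A ⧸ J) Ideal.Quotient.mk_surjective z
  have : y - f x ∈ J • (⊤ : Submodule A N) := by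
    rw [← ker_tensorProductMk, mem_ker, map_sub]
    simp [← hz]
  simpa using Submodule.add_mem_sup (mem_range_self f x) this

end QuotientTensor

end LinearMap

theorem Module.Flat.ker_inf_smul_top_le {A P N : Type*} [CommRing A] [AddCommGroup P]
    [Module A P] [AddCommGroup N] [Module A N] [Module.Flat A N] (f : P →ₗ[A] N)
    (hf : Surjective f) (J : Ideal A) :
    LinearMap.ker f ⊓ J • ⊤ ≤ J • LinearMap.ker f := by
  -- `Tor₁(A ⧸ J, N) = 0` as `N` is flat.
  have hpure : Function.Injective ((LinearMap.ker f).subtype.lTensor (A ⧸ J)) :=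
    lTensor_injective_of_exact_of_exact_of_rTensor_injective
      (LinearMap.exact_subtype_mkQ J) (Submodule.mkQ_surjective J) f.exact_subtype_ker_map hf
      (rTensor_preserves_injective_linearMap _ J.injective_subtype)
      (lTensor_preserves_injective_linearMap _ (LinearMap.ker f).injective_subtype)
  rintro x ⟨hxK, hxJ⟩
  have := (LinearMap.ker f).subtype.comap_smul_top_le_of_injective_lTensor hpure
    (x := ⟨x, hxK⟩) hxJ
  simpa [Submodule.map_smul'', Submodule.map_top] using
    Submodule.mem_map_of_mem (f := (LinearMap.ker f).subtype) this

namespace LinearMap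

variable {S T M N : Type*} [CommRing S] [CommRing T] [Algebra S T]
  [AddCommGroup M] [Module S M] [AddCommGroup N] [Module S N]

theorem baseChange_coprod {F : Type*} [AddCommGroup F] [Module S F] (u : M →ₗ[S] N)
    (g : F →ₗ[S] N) :
    (u.coprod g).baseChange T =
      (u.baseChange T).coprod (g.baseChange T) ∘ₗ (prodRight S T T M F).toLinearMap :=
  TensorProduct.AlgebraTensorModule.ext fun t x => by simp [tmul_add]

theorem bijective_baseChange_coprod_of_basis {ι : Type*} [Fintype ι] (u : M →ₗ[S] N)
    (hu : Injective (u.baseChange T))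
    (b : Module.Basis ι T (T ⊗[S] N ⧸ range (u.baseChange T)))
    (n : ι → N) (hn : ∀ i, (range (u.baseChange T)).mkQ (1 ⊗ₜ n i) = b i) :
    Bijective ((u.coprod (Fintype.linearCombination S n)).baseChange T) := by
  classical
  let b' := (Pi.basisFun S ι).baseChange T
  have hb' : (range (u.baseChange T)).mkQ ∘ₗ (Fintype.linearCombination S n).baseChange T =
      (b'.equiv b (Equiv.refl ι)).toLinearMap :=
    b'.ext fun i => by rw [LinearEquiv.coe_coe, Module.Basis.equiv_apply]; simp [b', hn]
  rw [baseChange_coprod, coe_comp, LinearEquiv.coe_coe]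
  refine ((bijective_coprod_iff _ _).mpr ⟨hu, ?_⟩).comp (LinearEquiv.bijective _)
  rw [hb']
  exact LinearEquiv.bijective _

end LinearMap

theorem LinearMap.bijective_of_bijective_baseChange_of_flat {R S P N : Type*} [CommRing R]
    [CommRing S] [Algebra R S] [IsNoetherianRing S]
    [AddCommGroup P] [Module S P] [Module R P] [IsScalarTower R S P]
    [AddCommGroup N] [Module S N] [Module R N] [IsScalarTower R S N]
    [Module.Finite S P] [Module.Finite S N] [Module.Flat R N]
    {J : Ideal R} (hJ : J.map (algebraMap R S) ≤ Ideal.jacobson ⊥) (w : P →ₗ[S] N)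
    (hw : Bijective (w.baseChange (S ⧸ J.map (algebraMap R S)))) : Bijective w := by
  rw [baseChange_eq_ltensor] at hw
  have hsurj := w.surjective_of_surjective_lTensor hJ hw.2
  refine ⟨?_, hsurj⟩
  have hker : ker w ≤ J.map (algebraMap R S) • ker w := by
    intro x hx
    have hxJ : x ∈ (J.map (algebraMap R S) • ⊤ : Submodule S P) :=
      w.comap_smul_top_le_of_injective_lTensor hw.1 (by simp [mem_ker.mp hx])
    rw [← Submodule.restrictScalars_mem R, Ideal.smul_restrictScalars] at hxJ ⊢
    exact Module.Flat.ker_inf_smul_top_le (w.restrictScalars R) hsurj J ⟨hx, hxJ⟩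
  rw [← ker_eq_bot]
  exact Submodule.eq_bot_of_le_smul_of_le_jacobson_bot _ _ (IsNoetherian.noetherian _) hker hJ

theorem stmt0_general {R S M N : Type*} [CommRing R] [CommRing S]
    [IsNoetherianRing S]
    [IsLocalRing R] [IsLocalRing S] [Algebra R S]
    [IsLocalHom (algebraMap R S)]
    [AddCommGroup M] [Module S M] [AddCommGroup N] [Module S N]
    [Module R M] [IsScalarTower R S M] [Module R N] [IsScalarTower R S N]
    [Module.Finite S M] [Module.Finite S N] [Module.Flat R N]
    (u : M →ₗ[S] N)
    (hinj : Function.Injective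
      (LinearMap.baseChange (S ⧸ (IsLocalRing.maximalIdeal R).map (algebraMap R S)) u))
    (hfree : Module.Free (S ⧸ (IsLocalRing.maximalIdeal R).map (algebraMap R S))
      (((S ⧸ (IsLocalRing.maximalIdeal R).map (algebraMap R S)) ⊗[S] N) ⧸
        LinearMap.range
          (LinearMap.baseChange (S ⧸ (IsLocalRing.maximalIdeal R).map (algebraMap R S)) u))) :
    Function.Injective u ∧ Module.Free S (N ⧸ LinearMap.range u) := by
  set I := (maximalIdeal R).map (algebraMap R S)
  have hI : I ≤ Ideal.jacobson ⊥ := by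
    rw [jacobson_eq_maximalIdeal ⊥ bot_ne_top]
    exact map_maximalIdeal_le _
  set C := (S ⧸ I) ⊗[S] N ⧸ LinearMap.range (u.baseChange (S ⧸ I))
  let b := Module.Free.chooseBasis (S ⧸ I) C
  have hlift := (Submodule.mkQ_surjective (LinearMap.range (u.baseChange (S ⧸ I)))).comp
    (TensorProduct.mk_surjective S N (S ⧸ I) Ideal.Quotient.mk_surjective)
  choose n hn using fun i => hlift (b i)
  have hw := u.bijective_baseChange_coprod_of_basis hinj b n hn
  obtain ⟨hu, hcoker⟩ := (u.bijective_coprod_iff _).mp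
    (LinearMap.bijective_of_bijective_baseChange_of_flat hI _ hw)
  exact ⟨hu, Module.Free.of_equiv (LinearEquiv.ofBijective _ hcoker)⟩

/--
Let `ψ : R → S` be a local homomorphism between commutative noetherian
local rings with maximal ideals `m ⊆ R` and `n ⊆ S`. Let `u : M → N` be a homomorphism of
finitely generated `S`-modules such that `N` is flat as an `R`-module. If the induced map
`u ⊗_R R/m : M/mM → N/mN` (realized here, via the canonical identification
`M ⊗_R R/m ≅ M ⊗_S S/mS`, as the base change of `u` along `S → S/mS`) is injective with
free `S/mS`-cokernel, then `u` is injective with free `S`-cokernel.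
-/
theorem stmt0 {R S M N : Type*} [CommRing R] [CommRing S]
    [IsNoetherianRing R] [IsNoetherianRing S]
    [IsLocalRing R] [IsLocalRing S] [Algebra R S]
    [IsLocalHom (algebraMap R S)]
    [AddCommGroup M] [Module S M] [AddCommGroup N] [Module S N]
    [Module R M] [IsScalarTower R S M] [Module R N] [IsScalarTower R S N]
    [Module.Finite S M] [Module.Finite S N] [Module.Flat R N]
    (u : M →ₗ[S] N)
    (hinj : Function.Injective
      (LinearMap.baseChange (S ⧸ (IsLocalRing.maximalIdeal R).map (algebraMap R S)) u))
    (hfree : Module.Free (S ⧸ (IsLocalRing.maximalIdeal R).map (algebraMap R S))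
      (((S ⧸ (IsLocalRing.maximalIdeal R).map (algebraMap R S)) ⊗[S] N) ⧸
        LinearMap.range
          (LinearMap.baseChange (S ⧸ (IsLocalRing.maximalIdeal R).map (algebraMap R S)) u))) :
    Function.Injective u ∧ Module.Free S (N ⧸ LinearMap.range u) :=
  stmt0_general u hinj hfree
end

section
/- Let R → T be a homomorphism of commutative rings and let E be a T-module (regarded as an R-module by restriction of scalars). Consider the canonical homomorphism of graded R-algebras Sym_R(E) → Sym_T(E), induced via the universal property of the symmetric algebra Sym_R(E) by the R-linear structure map E → Sym_T(E) (where Sym_T(E) is regarded as an R-algebra through R → T). Then this map is surjective in every degree n ≥ 1; that is, for each n ≥ 1 the induced map Sym^n_R(E) → Sym^n_T(E) on degree-n components is surjective. -/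
open TensorAlgebra

/-- The relation on the tensor algebra used to define the symmetric algebra. -/
inductive SymRel (R M : Type*) [CommRing R] [AddCommGroup M] [Module R M] :
    TensorAlgebra R M → TensorAlgebra R M → Prop
  | mul_comm (x y : M) : SymRel R M (ι R x * ι R y) (ι R y * ι R x)

/-- The symmetric algebra `Sym_R(M)` of a module `M` over a commutative ring `R`. -/
abbrev SymmAlg (R M : Type*) [CommRing R] [AddCommGroup M] [Module R M] :=
  RingQuot (_root_.SymRel R M)

/-- The canonical `R`-linear map `M → Sym_R(M)` (inclusion of degree one). -/
noncomputable def symι (R M : Type*) [CommRing R] [AddCommGroup M] [Module R M] :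
    M →ₗ[R] SymmAlg R M :=
  (RingQuot.mkAlgHom R (_root_.SymRel R M)).toLinearMap ∘ₗ ι R

variable (R T E : Type*) [CommRing R] [CommRing T] [Algebra R T]
  [AddCommGroup E] [Module T E] [Module R E] [IsScalarTower R T E]

/-- The canonical morphism of graded `R`-algebras `Sym_R(E) → Sym_T(E)` induced, via the
universal property of the symmetric algebra, by the `R`-linear map `E → Sym_T(E)`. -/
noncomputable def symMap : SymmAlg R E →ₐ[R] SymmAlg T E :=
  RingQuot.liftAlgHom R ⟨TensorAlgebra.lift R ((symι T E).restrictScalars R), by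
    rintro x y ⟨a, b⟩
    simp only [map_mul, TensorAlgebra.lift_ι_apply]
    have h := RingQuot.mkAlgHom_rel T (_root_.SymRel.mul_comm (R := T) (M := E) a b)
    simpa only [map_mul, symι, LinearMap.restrictScalars_apply, LinearMap.coe_comp,
      Function.comp_apply, AlgHom.toLinearMap_apply] using h⟩

lemma symMap_symι (e : E) : symMap R T E (symι R E e) = symι T E e := by
  simp only [symMap, symι, LinearMap.coe_comp, Function.comp_apply, AlgHom.toLinearMap_apply,
    RingQuot.liftAlgHom_mkAlgHom_apply, TensorAlgebra.lift_ι_apply]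
  rfl

lemma map_symMap_range_symι :
    (LinearMap.range (symι R E)).map (symMap R T E).toLinearMap =
      (LinearMap.range (symι T E)).restrictScalars R := by
  rw [← LinearMap.range_comp, ← LinearMap.range_restrictScalars]
  congr 1
  ext e
  exact symMap_symι R T E e

/--
Let `R → T` be a homomorphism of commutative rings and `E` a `T`-module.
The canonical homomorphism of graded `R`-algebras `Sym_R(E) → Sym_T(E)` is surjective in
every degree `n ≥ 1`: every element of the degree-`n` component of `Sym_T(E)` (the `n`-th
power of the image of `E`) is the image of an element of the degree-`n` component of
`Sym_R(E)`.
-/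
theorem stmt6 (n : ℕ) (hn : 1 ≤ n) :
    ∀ x ∈ (LinearMap.range (symι T E)) ^ n,
      ∃ y ∈ (LinearMap.range (symι R E)) ^ n, symMap R T E y = x := by
  intro x hx
  have hx' : x ∈ ((LinearMap.range (symι T E)) ^ n).restrictScalars R := hx
  -- For `n ≥ 1` a scalar of `T` can be absorbed into one factor `symι T E e`, so the `T`-span
  -- of the `n`-fold products is already their `R`-span.
  rwa [Submodule.restrictScalars_pow (by omega), ← map_symMap_range_symι,
    ← Submodule.map_pow, Submodule.mem_map] at hx'
end

section
/- Let R be a commutative local ring and let V and W be free R-modules of rank two. Let r ∈ V ⊗_R W be a non-degenerate tensor, i.e. the R-linear map Hom_R(V, R) → W associated to r is an isomorphism. Then there exist a basis (x, y) of V and a basis (x', y') of W such that r = y ⊗ x' − x ⊗ y'. -/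
/-
A tensor is nothing but its contraction map `Hom_R(V, R) → W`: in coordinates,
`r = ∑ bᵢ ⊗ c(bᵢ*)`. When `c` is an isomorphism it carries the basis `(y*, -x*)` of the dual
of a basis `(x, y)` of `V` to a basis `(x', y')` of `W`, and then `r = x ⊗ (-y') + y ⊗ x'`.
-/

open TensorProduct

variable {R V W : Type*} [CommRing R] [AddCommGroup V] [Module R V]
  [AddCommGroup W] [Module R W]

/-- The `R`-linear map `Hom_R(V, R) → W` associated to a tensor `r ∈ V ⊗_R W`, obtained by
contracting a functional against the first tensor factor: `f ⊗ (v ⊗ w) ↦ f(v) • w`. -/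
noncomputable def tensorContract (r : V ⊗[R] W) : Module.Dual R V →ₗ[R] W where
  toFun f := TensorProduct.lid R W (LinearMap.rTensor W f r)
  map_add' f g := by
    simp only [LinearMap.rTensor_add, LinearMap.add_apply, map_add]
  map_smul' c f := by
    simp only [LinearMap.rTensor_smul, LinearMap.smul_apply, map_smul, RingHom.id_apply]

lemma tensorContract_add (r s : V ⊗[R] W) (f : Module.Dual R V) :
    tensorContract (r + s) f = tensorContract r f + tensorContract s f := by
  simp [tensorContract]

lemma tensorContract_tmul (v : V) (w : W) (f : Module.Dual R V) :
    tensorContract (v ⊗ₜ[R] w) f = f v • w := by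
  simp [tensorContract]

lemma sum_tmul_tensorContract_coord {ι : Type*} [Fintype ι] (b : Module.Basis ι R V)
    (r : V ⊗[R] W) : ∑ i, b i ⊗ₜ[R] tensorContract r (b.coord i) = r := by
  induction r using TensorProduct.induction_on with
  | zero => simp [tensorContract]
  | tmul v w =>
    simp only [tensorContract_tmul, ← TensorProduct.smul_tmul, ← TensorProduct.sum_tmul]
    congr 1
    simp [Module.Basis.coord_apply, b.sum_repr v]
  | add x y hx hy =>
    simp only [tensorContract_add, TensorProduct.tmul_add, Finset.sum_add_distrib, hx, hy]

/-- The basis `(y*, -x*)` of `Hom_R(V, R)` attached to a basis `(x, y)` of `V`. -/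
noncomputable def Module.Basis.dualRotate (b : Module.Basis (Fin 2) R V) :
    Module.Basis (Fin 2) R (Module.Dual R V) :=
  (b.dualBasis.reindex (Equiv.swap 0 1)).unitsSMul ![1, -1]

@[simp]
lemma Module.Basis.dualRotate_zero (b : Module.Basis (Fin 2) R V) :
    b.dualRotate 0 = b.coord 1 := by
  simp [dualRotate, unitsSMul_apply, Module.Basis.coe_dualBasis]

@[simp]
lemma Module.Basis.dualRotate_one (b : Module.Basis (Fin 2) R V) :
    b.dualRotate 1 = -b.coord 0 := by
  simp [dualRotate, unitsSMul_apply, Module.Basis.coe_dualBasis]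

theorem stmt8_general
    (bV : Module.Basis (Fin 2) R V)
    (r : V ⊗[R] W)
    (hr : Function.Bijective (tensorContract r)) :
    ∃ (b : Module.Basis (Fin 2) R V) (b' : Module.Basis (Fin 2) R W),
      r = b 1 ⊗ₜ[R] b' 0 - b 0 ⊗ₜ[R] b' 1 := by
  refine ⟨bV, bV.dualRotate.map (LinearEquiv.ofBijective _ hr), ?_⟩
  simp only [Module.Basis.map_apply, Module.Basis.dualRotate_zero,
    Module.Basis.dualRotate_one, LinearEquiv.ofBijective_apply, map_neg, tmul_neg,
    sub_neg_eq_add]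
  conv_lhs => rw [← sum_tmul_tensorContract_coord bV r, Fin.sum_univ_two, add_comm]

/--
Let `R` be a commutative local ring and let `V` and `W` be free `R`-modules
of rank two. Let `r ∈ V ⊗_R W` be a non-degenerate tensor, i.e. the associated `R`-linear map
`Hom_R(V, R) → W` is an isomorphism. Then there exist a basis `(x, y)` of `V` and a basis
`(x', y')` of `W` such that `r = y ⊗ x' − x ⊗ y'`.
-/
theorem stmt8 [IsLocalRing R]
    (bV : Module.Basis (Fin 2) R V) (bW : Module.Basis (Fin 2) R W)
    (r : V ⊗[R] W)
    (hr : Function.Bijective (tensorContract r)) :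
    ∃ (b : Module.Basis (Fin 2) R V) (b' : Module.Basis (Fin 2) R W),
      r = b 1 ⊗ₜ[R] b' 0 - b 0 ⊗ₜ[R] b' 1 :=
  stmt8_general bV r hr
end
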